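/- Let A, B ∈ ℂⁿˣⁿ with A invertible, and suppose SRG(A⁻¹ + B) ⊆ SRG(A⁻¹) + SRG(B) (Minkowski sum). If SRG(A)⁻¹ ∩ (−SRG(B)) = ∅, where SRG(A)⁻¹ := { (z⁻¹)* : z ∈ SRG(A) }, then det(I + AB) ≠ 0. -/

import Mathlib

open Complex Pointwise

noncomputable def ang {n : ℕ} (y u : EuclideanSpace ℂ (Fin n)) : ℝ :=
  Real.arccos ((inner ℂ y u : ℂ).re / (‖y‖ * ‖u‖))

noncomputable def SRG {n : ℕ}
    (A : EuclideanSpace ℂ (Fin n) →ₗ[ℂ] EuclideanSpace ℂ (Fin n)) : Set ℂ :=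
  { z | ∃ u : EuclideanSpace ℂ (Fin n), u ≠ 0 ∧
      (z = ((‖A u‖ / ‖u‖ : ℝ) : ℂ) * Complex.exp ((ang (A u) u : ℝ) * Complex.I) ∨
       z = ((‖A u‖ / ‖u‖ : ℝ) : ℂ) * Complex.exp (-((ang (A u) u : ℝ)) * Complex.I)) }

noncomputable def SRGm {n : ℕ} (A : Matrix (Fin n) (Fin n) ℂ) : Set ℂ :=
  SRG (Matrix.toEuclideanLin A)

/-! A singular matrix has a null vector `u`, whose SRG point is `0`. The point of `SRG(A⁻¹)`
attached to `u` is the conjugate inverse of the point of `SRG(A)` attached to `A⁻¹ u`, since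
norm ratios invert and angles are symmetric. So if `I + AB`, hence `A⁻¹ + B = A⁻¹(I + AB)`, were
singular, the hypothesis would write `0 = x + y` with `x ∈ SRG(A)⁻¹` and `y ∈ SRG(B)`,
i.e. `x ∈ SRG(A)⁻¹ ∩ (-SRG(B))`. -/

lemma ang_comm {n : ℕ} (y u : EuclideanSpace ℂ (Fin n)) : ang y u = ang u y := by
  rw [ang, ang, ← inner_conj_symm y u, Complex.conj_re, mul_comm ‖y‖]

lemma conj_inv_ofReal_mul_exp (r θ : ℝ) :
    (starRingEnd ℂ) (((r : ℂ) * Complex.exp (θ * Complex.I))⁻¹)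
      = ((r⁻¹ : ℝ) : ℂ) * Complex.exp (θ * Complex.I) := by
  rw [mul_inv, ← Complex.exp_neg, map_mul, ← Complex.exp_conj, map_inv₀]
  simp

lemma conj_inv_ofReal_mul_exp_neg (r θ : ℝ) :
    (starRingEnd ℂ) (((r : ℂ) * Complex.exp (-θ * Complex.I))⁻¹)
      = ((r⁻¹ : ℝ) : ℂ) * Complex.exp (-θ * Complex.I) := by
  simpa only [Complex.ofReal_neg] using conj_inv_ofReal_mul_exp r (-θ)

lemma zero_mem_SRG_of_apply_eq_zero {n : ℕ}
    {A : EuclideanSpace ℂ (Fin n) →ₗ[ℂ] EuclideanSpace ℂ (Fin n)}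
    {u : EuclideanSpace ℂ (Fin n)} (hu : u ≠ 0) (hAu : A u = 0) : (0 : ℂ) ∈ SRG A :=
  ⟨u, hu, Or.inl (by simp [hAu])⟩

lemma zero_mem_SRGm_of_det_eq_zero {n : ℕ} {M : Matrix (Fin n) (Fin n) ℂ} (h : M.det = 0) :
    (0 : ℂ) ∈ SRGm M := by
  obtain ⟨v, hv, hMv⟩ := Matrix.exists_mulVec_eq_zero_iff.mpr h
  refine zero_mem_SRG_of_apply_eq_zero (u := WithLp.toLp 2 v) (by simpa using hv) ?_
  simp [hMv]

lemma SRG_subset_conj_inv_SRG_of_rightInverse {n : ℕ}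
    {A A' : EuclideanSpace ℂ (Fin n) →ₗ[ℂ] EuclideanSpace ℂ (Fin n)}
    (hAA' : ∀ u, A (A' u) = u) :
    SRG A' ⊆ { w : ℂ | ∃ z ∈ SRG A, w = (starRingEnd ℂ) z⁻¹ } := by
  rintro x ⟨u, hu, hx⟩
  have hv : A' u ≠ 0 := fun h => hu (by rw [← hAA' u, h, map_zero])
  rcases hx with rfl | rfl
  · refine ⟨_, ⟨A' u, hv, Or.inl rfl⟩, ?_⟩
    rw [conj_inv_ofReal_mul_exp, hAA', inv_div, ang_comm]
  · refine ⟨_, ⟨A' u, hv, Or.inr rfl⟩, ?_⟩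
    rw [conj_inv_ofReal_mul_exp_neg, hAA', inv_div, ang_comm]

lemma SRGm_inv_subset_conj_inv_SRGm {n : ℕ} {A : Matrix (Fin n) (Fin n) ℂ} (hA : IsUnit A) :
    SRGm A⁻¹ ⊆ { w : ℂ | ∃ z ∈ SRGm A, w = (starRingEnd ℂ) z⁻¹ } := by
  refine SRG_subset_conj_inv_SRG_of_rightInverse fun u => ?_
  simp [Matrix.toLpLin_apply, Matrix.mulVec_mulVec,
    Matrix.mul_nonsing_inv A ((Matrix.isUnit_iff_isUnit_det A).mp hA)]

theorem srg_separation_det {n : ℕ} (A B : Matrix (Fin n) (Fin n) ℂ)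
    (hA : IsUnit A)
    (hsub : SRGm (A⁻¹ + B) ⊆ SRGm A⁻¹ + SRGm B)
    (hsep : { w : ℂ | ∃ z ∈ SRGm A, w = (starRingEnd ℂ) z⁻¹ } ∩ (-(SRGm B)) = ∅) :
    (1 + A * B).det ≠ 0 := by
  intro hdet
  have hsing : (A⁻¹ + B).det = 0 := by
    have hfactor : A⁻¹ + B = A⁻¹ * (1 + A * B) := by
      rw [mul_add, mul_one, ← mul_assoc, Matrix.nonsing_inv_mul A
        ((Matrix.isUnit_iff_isUnit_det A).mp hA), one_mul]
    rw [hfactor, Matrix.det_mul, hdet, mul_zero]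
  obtain ⟨x, hx, y, hy, hxy : x + y = 0⟩ := hsub (zero_mem_SRGm_of_det_eq_zero hsing)
  have hx_mem : x ∈ { w : ℂ | ∃ z ∈ SRGm A, w = (starRingEnd ℂ) z⁻¹ } ∩ (-(SRGm B)) :=
    ⟨SRGm_inv_subset_conj_inv_SRGm hA hx, by rwa [Set.mem_neg, ← eq_neg_of_add_eq_zero_right hxy]⟩
  rw [hsep] at hx_mem
  exact hx_mem
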